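/- For the configuration C₂(m,l), the dimension of the space of all homogeneous quasi-invariant polynomials of degree n, for n even, equals [n = 0 ? 1 : n/2] + (0 if n < 2(m+l+1), 1 if n = 2(m+l+1), n/2 − m − l − 1 if n > 2(m+l+1)). -/

import Mathlib

open MvPolynomial

/-- Evaluation at the point `(x, y) ∈ ℂ²`, as a linear map on polynomials. -/
noncomputable def evalAt (x y : ℂ) : MvPolynomial (Fin 2) ℂ →ₗ[ℂ] ℂ :=
  (MvPolynomial.aeval ![x, y]).toLinearMap

/-- The directional derivative `a·∂_x + b·∂_y` on polynomials in two variables. -/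
noncomputable def dirD (a b : ℂ) : Module.End ℂ (MvPolynomial (Fin 2) ℂ) :=
  a • (MvPolynomial.pderiv 0).toLinearMap + b • (MvPolynomial.pderiv 1).toLinearMap

/-- The submodule of quasi-invariants of the configuration `C₂(m,l)`: the line `x = 0` carries
multiplicity `m`, the line `y = 0` multiplicity `l`, and the lines `ξx ± y = 0` (normal vectors
`ξe₁ ± e₂`) multiplicity `1`, where `ξ² = (2l+1)/(2m+1)`. A polynomial `q` is quasi-invariant
if the odd normal derivatives `∂_α^{2r-1} q`, `r = 1,...,m_α`, vanish on each line. -/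
noncomputable def quasiC (m l : ℕ) (ξ : ℂ) : Submodule ℂ (MvPolynomial (Fin 2) ℂ) :=
  (⨅ r ∈ Finset.Icc 1 m, ⨅ y : ℂ,
    LinearMap.ker ((evalAt 0 y).comp ((dirD 1 0 ^ (2 * r - 1) : Module.End ℂ _) :
      MvPolynomial (Fin 2) ℂ →ₗ[ℂ] MvPolynomial (Fin 2) ℂ))) ⊓
  (⨅ r ∈ Finset.Icc 1 l, ⨅ x : ℂ,
    LinearMap.ker ((evalAt x 0).comp ((dirD 0 1 ^ (2 * r - 1) : Module.End ℂ _) :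
      MvPolynomial (Fin 2) ℂ →ₗ[ℂ] MvPolynomial (Fin 2) ℂ))) ⊓
  (⨅ t : ℂ, LinearMap.ker ((evalAt t (-(ξ * t))).comp (dirD ξ 1))) ⊓
  (⨅ t : ℂ, LinearMap.ker ((evalAt t (ξ * t)).comp (dirD ξ (-1))))

/-- The submodule of polynomials supported on a set `s` of monomials. -/
noncomputable def suppOn (s : Set (Fin 2 →₀ ℕ)) : Submodule ℂ (MvPolynomial (Fin 2) ℂ) where
  carrier := {q | ∀ d, d ∉ s → MvPolynomial.coeff d q = 0}
  add_mem' := by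
    intro p q hp hq d hd
    simp [MvPolynomial.coeff_add, hp d hd, hq d hd]
  zero_mem' := by intro d hd; simp
  smul_mem' := by
    intro c q hq d hd
    simp [MvPolynomial.coeff_smul, hq d hd]


/-!
A homogeneous `q = ∑ aₖ xᵏ yⁿ⁻ᵏ` and all its derivatives are homogeneous, so each condition
"vanishes on a line through the origin" only has to be checked at one point of the line. On the
axes this kills the coefficients `aₖ` with `k` odd and `k < 2m` or `n - k < 2l`; on the lines
`y = ∓ξx` it is one linear equation `∑ aₖ cₖ^± = 0`, and for even `n` we have
`cₖ^+ = (-1)ᵏ cₖ^-`. Adding and subtracting, the conditions decouple into `∑_{k even} aₖ cₖ^- = 0`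
and `∑_{k odd} aₖ cₖ^- = 0` on the surviving coefficients. Each parity class thus contributes its
number of free coefficients, `n/2 + 1` resp. `n/2 - m - l`, minus one unless its equation is
trivial. Because `ξ² = (2l+1)/(2m+1)`, `cₖ^-` vanishes iff `(2l+1)k = (2m+1)(n-k)`; so `c₀^- ≠ 0`
unless `n = 0`, and `c_{2m+1}^- ≠ 0` unless `n = 2(m+l+1)`, when `2m+1` is the only free odd
exponent.
-/

open Module

theorem Submodule.finrank_inf_ker_add_one {K V : Type*} [Field K] [AddCommGroup V] [Module K V]
    {p : Submodule K V} [FiniteDimensional K p] {g : Dual K V} (hg : ¬ p ≤ LinearMap.ker g) :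
    finrank K ↥(p ⊓ LinearMap.ker g) + 1 = finrank K p := by
  have hne : g.domRestrict p ≠ 0 := fun h => hg fun v hv => by
    simpa using LinearMap.congr_fun h ⟨v, hv⟩
  rw [← Dual.finrank_ker_add_one_of_ne_zero hne, LinearMap.ker_domRestrict,
    (Submodule.equivMapOfInjective _ p.injective_subtype _).finrank_eq, Submodule.map_comap_subtype]

theorem Fintype.sum_ite_eq_zero_iff {ι M : Type*} [Fintype ι] [AddCommMonoid M] {p : ι → Prop}
    [DecidablePred p] (hp : ∀ i j, p i → p j → i = j) (f : ι → M) :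
    (∑ i, if p i then f i else 0) = 0 ↔ ∀ i, p i → f i = 0 := by
  by_cases h : ∃ i, p i
  · obtain ⟨i₀, hi₀⟩ := h
    rw [Fintype.sum_eq_single i₀ fun i hi => if_neg fun hpi => hi (hp _ _ hpi hi₀), if_pos hi₀]
    exact ⟨fun h i hi => hp _ _ hi hi₀ ▸ h, fun h => h i₀ hi₀⟩
  · simp_all

open Finset in
theorem card_filter_fin_eq_card_filter_range (N : ℕ) (p : ℕ → Prop) [DecidablePred p] :
    #{k : Fin N | p k} = #{k ∈ range N | p k} := by
  rw [card_filter, card_filter]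
  exact Fin.sum_univ_eq_sum_range (fun k => if p k then 1 else 0) N

theorem descFactorial_mul_zero_pow {R : Type*} [Semiring R] (k j : ℕ) :
    (k.descFactorial j : R) * 0 ^ (k - j) = if k = j then (j.factorial : R) else 0 := by
  rcases lt_trichotomy k j with h | rfl | h
  · simp [Nat.descFactorial_eq_zero_iff_lt.2 h, h.ne]
  · simp [Nat.descFactorial_self]
  · simp [h.ne', Nat.sub_ne_zero_of_lt h]

theorem neg_one_pow_sub_of_even {R : Type*} [CommRing R] {n k : ℕ} (hn : Even n) (hk : k ≤ n) :
    (-1 : R) ^ (n - k) = (-1) ^ k := by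
  have h : (-1 : R) ^ (n - k) * (-1) ^ k = 1 := by
    rw [← pow_add, Nat.sub_add_cancel hk, hn.neg_one_pow]
  have hsq : (-1 : R) ^ k * (-1) ^ k = 1 := by
    rw [← pow_add, ← two_mul, pow_mul, neg_one_sq, one_pow]
  linear_combination (-1 : R) ^ k * h - (-1 : R) ^ (n - k) * hsq

section SupportedOn

variable {ι K : Type*} [Field K]

noncomputable def supportedOn (S : Finset ι) : Submodule K (ι → K) :=
  ⨅ i ∈ (↑S : Set ι)ᶜ, LinearMap.ker (LinearMap.proj i)

theorem mem_supportedOn {S : Finset ι} {a : ι → K} :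
    a ∈ supportedOn S ↔ ∀ i ∉ S, a i = 0 := by
  simp [supportedOn]

theorem finrank_supportedOn [DecidableEq ι] (S : Finset ι) :
    finrank K (supportedOn (K := K) S) = S.card := by
  rw [supportedOn, (LinearMap.iInfKerProjEquiv K (fun _ : ι => K) (I := ↑S) disjoint_compl_right
    (by simp)).finrank_eq, finrank_pi]
  simp

theorem disjoint_supportedOn {S T : Finset ι} (hST : Disjoint S T) :
    Disjoint (supportedOn (K := K) S) (supportedOn T) := by
  rw [Submodule.disjoint_def]
  intro a hS hT
  funext i
  by_cases hi : i ∈ S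
  · exact mem_supportedOn.1 hT i (Finset.disjoint_left.1 hST hi)
  · exact mem_supportedOn.1 hS i hi

variable [Fintype ι]

theorem sum_mul_eq_sum_of_mem_supportedOn {S : Finset ι} {a : ι → K} (ha : a ∈ supportedOn S)
    (f : ι → K) : ∑ i, a i * f i = ∑ i ∈ S, a i * f i :=
  (Finset.sum_subset (Finset.subset_univ _) fun i _ hi => by
    rw [mem_supportedOn.1 ha i hi, zero_mul]).symm

theorem supportedOn_le_ker_iff {S : Finset ι} {c : ι → K} :
    supportedOn S ≤ LinearMap.ker (Fintype.linearCombination K c) ↔ ∀ i ∈ S, c i = 0 := by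
  classical
  constructor
  · intro h i hi
    have hsingle : Pi.single i (1 : K) ∈ supportedOn S :=
      mem_supportedOn.2 fun j hj => Pi.single_eq_of_ne (by rintro rfl; exact hj hi) _
    simpa using h hsingle
  · intro h a ha
    rw [LinearMap.mem_ker, Fintype.linearCombination_apply]
    simp_rw [smul_eq_mul]
    rw [sum_mul_eq_sum_of_mem_supportedOn ha]
    exact Finset.sum_eq_zero fun i hi => by rw [h i hi, mul_zero]

noncomputable def supportedKer (S : Finset ι) (c : ι → K) : Submodule K (ι → K) :=
  supportedOn S ⊓ LinearMap.ker (Fintype.linearCombination K c)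

theorem mem_supportedKer {S : Finset ι} {c a : ι → K} :
    a ∈ supportedKer S c ↔ (∀ i ∉ S, a i = 0) ∧ ∑ i, a i * c i = 0 := by
  simp [supportedKer, mem_supportedOn, Fintype.linearCombination_apply]

theorem finrank_supportedKer_of_forall_eq_zero [DecidableEq ι] {S : Finset ι} {c : ι → K}
    (hc : ∀ i ∈ S, c i = 0) : finrank K (supportedKer S c) = S.card := by
  rw [supportedKer, inf_eq_left.2 (supportedOn_le_ker_iff.2 hc), finrank_supportedOn]

theorem finrank_supportedKer_add_one [DecidableEq ι] {S : Finset ι} {c : ι → K}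
    (hc : ∃ i ∈ S, c i ≠ 0) : finrank K (supportedKer S c) + 1 = S.card := by
  rw [supportedKer, Submodule.finrank_inf_ker_add_one, finrank_supportedOn]
  simpa [supportedOn_le_ker_iff] using hc

theorem supportedKer_sup_supportedKer [DecidableEq ι] [NeZero (2 : K)] {S T : Finset ι}
    (hST : Disjoint S T) (c ε : ι → K) (hS : ∀ i ∈ S, ε i = 1) (hT : ∀ i ∈ T, ε i = -1) :
    supportedKer S c ⊔ supportedKer T c =
      supportedKer (S ∪ T) c ⊓ LinearMap.ker (Fintype.linearCombination K (ε * c)) := by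
  have hε : ∀ {U : Finset ι} {s : K}, (∀ i ∈ U, ε i = s) → ∀ a ∈ supportedOn U,
      ∑ i, a i * (ε * c) i = s * ∑ i, a i * c i := by
    intro U s hU a ha
    rw [sum_mul_eq_sum_of_mem_supportedOn ha, sum_mul_eq_sum_of_mem_supportedOn ha, Finset.mul_sum]
    exact Finset.sum_congr rfl fun i hi => by rw [Pi.mul_apply, hU i hi]; ring
  have hle : ∀ {U : Finset ι} {s : K}, U ⊆ S ∪ T → (∀ i ∈ U, ε i = s) →
      supportedKer U c ≤
        supportedKer (S ∪ T) c ⊓ LinearMap.ker (Fintype.linearCombination K (ε * c)) := by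
    rintro U s hU hUs a ⟨ha, hsum⟩
    refine ⟨⟨mem_supportedOn.2 fun i hi => mem_supportedOn.1 ha i fun h => hi (hU h), hsum⟩, ?_⟩
    simp only [SetLike.mem_coe, LinearMap.mem_ker, Fintype.linearCombination_apply,
      smul_eq_mul] at hsum ⊢
    rw [hε hUs a ha, hsum, mul_zero]
  refine le_antisymm (sup_le (hle Finset.subset_union_left hS) (hle Finset.subset_union_right hT)) ?_
  rintro a ⟨⟨ha, hsum⟩, hεsum⟩
  set aS : ι → K := fun i => if i ∈ S then a i else 0
  set aT : ι → K := fun i => if i ∈ T then a i else 0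
  have haS : aS ∈ supportedOn S := mem_supportedOn.2 fun i hi => if_neg hi
  have haT : aT ∈ supportedOn T := mem_supportedOn.2 fun i hi => if_neg hi
  have hsplit : a = aS + aT := by
    funext i
    by_cases hi : i ∈ S
    · simp [aS, aT, hi, Finset.disjoint_left.1 hST hi]
    · by_cases hi' : i ∈ T
      · simp [aS, aT, hi, hi']
      · simp [aS, aT, hi, hi', mem_supportedOn.1 ha i (by simp [hi, hi'])]
  simp only [SetLike.mem_coe, LinearMap.mem_ker, Fintype.linearCombination_apply, smul_eq_mul,
    hsplit, Pi.add_apply, add_mul, Finset.sum_add_distrib] at hsum hεsum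
  rw [hε hS aS haS, hε hT aT haT] at hεsum
  have hσS : ∑ i, aS i * c i = 0 := by
    have : (2 : K) * ∑ i, aS i * c i = 0 := by linear_combination hsum + hεsum
    exact (mul_eq_zero.1 this).resolve_left two_ne_zero
  have hσT : ∑ i, aT i * c i = 0 := by linear_combination hsum - hσS
  rw [hsplit]
  exact Submodule.add_mem_sup (mem_supportedKer.2 ⟨mem_supportedOn.1 haS, hσS⟩)
    (mem_supportedKer.2 ⟨mem_supportedOn.1 haT, hσT⟩)

theorem finrank_supportedKer_inf_ker [DecidableEq ι] [NeZero (2 : K)] {S T : Finset ι}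
    (hST : Disjoint S T) (c ε : ι → K) (hS : ∀ i ∈ S, ε i = 1) (hT : ∀ i ∈ T, ε i = -1) :
    finrank K ↥(supportedKer (S ∪ T) c ⊓ LinearMap.ker (Fintype.linearCombination K (ε * c))) =
      finrank K (supportedKer S c) + finrank K (supportedKer T c) := by
  have hdisj : supportedKer S c ⊓ supportedKer T c = ⊥ :=
    ((disjoint_supportedOn hST).mono inf_le_left inf_le_left).eq_bot
  rw [← supportedKer_sup_supportedKer hST c ε hS hT, ← Submodule.finrank_sup_add_finrank_inf_eq,
    hdisj, finrank_bot, add_zero]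

end SupportedOn

theorem MvPolynomial.IsHomogeneous.eval_smul {σ R : Type*} [Fintype σ] [CommSemiring R]
    {φ : MvPolynomial σ R} {n : ℕ} (hφ : φ.IsHomogeneous n) (t : R) (v : σ → R) :
    eval (t • v) φ = t ^ n * eval v φ := by
  rw [eval_eq', eval_eq', Finset.mul_sum]
  refine Finset.sum_congr rfl fun d hd => ?_
  have hdeg : ∑ i, d i = n := by
    simpa [Finsupp.weight_apply, Finsupp.sum_fintype] using hφ (mem_support_iff.1 hd)
  simp only [Pi.smul_apply, smul_eq_mul, mul_pow, Finset.prod_mul_distrib,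
    Finset.prod_pow_eq_pow_sum, hdeg]
  ring

theorem evalAt_mul_of_isHomogeneous {p : MvPolynomial (Fin 2) ℂ} {d : ℕ} (hp : p.IsHomogeneous d)
    (t x y : ℂ) : evalAt (t * x) (t * y) p = t ^ d * evalAt x y p := by
  have : ![t * x, t * y] = t • ![x, y] := by simp
  simp only [evalAt, AlgHom.toLinearMap_apply, aeval_eq_eval, this, hp.eval_smul]

theorem forall_evalAt_mul_eq_zero_iff {p : MvPolynomial (Fin 2) ℂ} {d : ℕ}
    (hp : p.IsHomogeneous d) (x y : ℂ) :
    (∀ t, evalAt (t * x) (t * y) p = 0) ↔ evalAt x y p = 0 :=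
  ⟨fun h => by simpa using h 1, fun h t => by rw [evalAt_mul_of_isHomogeneous hp, h, mul_zero]⟩

theorem isHomogeneous_dirD {p : MvPolynomial (Fin 2) ℂ} {d : ℕ} (hp : p.IsHomogeneous d)
    (b₁ b₂ : ℂ) : (dirD b₁ b₂ p).IsHomogeneous (d - 1) :=
  show _ ∈ homogeneousSubmodule (Fin 2) ℂ (d - 1) from
    add_mem (Submodule.smul_mem _ _ hp.pderiv) (Submodule.smul_mem _ _ hp.pderiv)

theorem isHomogeneous_dirD_pow {p : MvPolynomial (Fin 2) ℂ} {d : ℕ} (hp : p.IsHomogeneous d)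
    (b₁ b₂ : ℂ) (j : ℕ) : ((dirD b₁ b₂ ^ j) p).IsHomogeneous (d - j) := by
  induction j with
  | zero => simpa using hp
  | succ j ih =>
    rw [pow_succ', Module.End.mul_apply, ← Nat.sub_sub]
    exact isHomogeneous_dirD ih b₁ b₂

noncomputable def xyMonomial (k s : ℕ) : MvPolynomial (Fin 2) ℂ := X 0 ^ k * X 1 ^ s

theorem xyMonomial_eq_monomial (k s : ℕ) :
    xyMonomial k s = monomial (Finsupp.single 0 k + Finsupp.single 1 s) 1 := by
  rw [xyMonomial, X_pow_eq_monomial, X_pow_eq_monomial, monomial_mul, one_mul]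

theorem isHomogeneous_xyMonomial (k s : ℕ) : (xyMonomial k s).IsHomogeneous (k + s) :=
  (isHomogeneous_X_pow 0 k).mul (isHomogeneous_X_pow 1 s)

theorem evalAt_xyMonomial (x y : ℂ) (k s : ℕ) : evalAt x y (xyMonomial k s) = x ^ k * y ^ s := by
  simp [evalAt, xyMonomial]

theorem dirD_xyMonomial (b₁ b₂ : ℂ) (k s : ℕ) :
    dirD b₁ b₂ (xyMonomial k s) =
      (b₁ * k) • xyMonomial (k - 1) s + (b₂ * s) • xyMonomial k (s - 1) := by
  cases k <;> cases s <;> simp [dirD, xyMonomial, pderiv_X, smul_eq_C_mul] <;> ring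

theorem dirD_one_zero_pow_xyMonomial (j k s : ℕ) :
    (dirD 1 0 ^ j) (xyMonomial k s) = (k.descFactorial j : ℂ) • xyMonomial (k - j) s := by
  induction j with
  | zero => simp
  | succ j ih =>
    rw [pow_succ', Module.End.mul_apply, ih, map_smul, dirD_xyMonomial]
    simp [smul_smul, Nat.descFactorial_succ, Nat.sub_sub, mul_comm]

theorem dirD_zero_one_pow_xyMonomial (j k s : ℕ) :
    (dirD 0 1 ^ j) (xyMonomial k s) = (s.descFactorial j : ℂ) • xyMonomial k (s - j) := by
  induction j with
  | zero => simp
  | succ j ih =>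
    rw [pow_succ', Module.End.mul_apply, ih, map_smul, dirD_xyMonomial]
    simp [smul_smul, Nat.descFactorial_succ, Nat.sub_sub, mul_comm]

noncomputable def binaryForm (n : ℕ) : (Fin (n + 1) → ℂ) →ₗ[ℂ] MvPolynomial (Fin 2) ℂ :=
  Fintype.linearCombination ℂ fun k => xyMonomial k (n - k)

theorem binaryForm_apply (n : ℕ) (a : Fin (n + 1) → ℂ) :
    binaryForm n a = ∑ k, a k • xyMonomial k (n - k) :=
  Fintype.linearCombination_apply _ _ _

theorem isHomogeneous_binaryForm (n : ℕ) (a : Fin (n + 1) → ℂ) :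
    (binaryForm n a).IsHomogeneous n := by
  rw [binaryForm_apply]
  refine Submodule.sum_mem (homogeneousSubmodule _ _ _) fun k _ => Submodule.smul_mem _ _ ?_
  simpa [Nat.add_sub_cancel' (Nat.lt_succ_iff.1 k.2)] using isHomogeneous_xyMonomial k (n - k)

theorem binaryForm_injective (n : ℕ) : Function.Injective (binaryForm n) := by
  rw [binaryForm, ← linearIndependent_iff_injective_fintypeLinearCombination]
  have hinj : Function.Injective fun k : Fin (n + 1) =>
      (Finsupp.single 0 (k : ℕ) + Finsupp.single 1 (n - k) : Fin 2 →₀ ℕ) := fun k k' h => by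
    simpa [Fin.ext_iff] using DFunLike.congr_fun h 0
  simpa [Function.comp_def, xyMonomial_eq_monomial] using
    (basisMonomials (Fin 2) ℂ).linearIndependent.comp _ hinj

theorem range_binaryForm (n : ℕ) :
    LinearMap.range (binaryForm n) = homogeneousSubmodule (Fin 2) ℂ n := by
  refine le_antisymm (LinearMap.range_le_iff_comap.2 (eq_top_iff.2 fun a _ =>
    isHomogeneous_binaryForm n a)) ?_
  rw [homogeneousSubmodule_eq_finsupp_supported, AddMonoidAlgebra.supported_eq_span_single,
    Submodule.span_le]
  rintro _ ⟨d, hd, rfl⟩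
  have hdeg : d 0 + d 1 = n := by
    simpa [Finsupp.degree_eq_sum, Fin.sum_univ_two] using hd
  refine ⟨Pi.single ⟨d 0, by omega⟩ 1, ?_⟩
  have hd' : d = Finsupp.single 0 (d 0) + Finsupp.single 1 (n - d 0) := by
    ext i
    fin_cases i <;> simp [← hdeg]
  rw [binaryForm, Fintype.linearCombination_apply_single, one_smul, xyMonomial_eq_monomial, ← hd']
  rfl

theorem finrank_homogeneousSubmodule_inf (n : ℕ) (Q : Submodule ℂ (MvPolynomial (Fin 2) ℂ)) :
    finrank ℂ ↥(homogeneousSubmodule (Fin 2) ℂ n ⊓ Q) =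
      finrank ℂ (Submodule.comap (binaryForm n) Q) := by
  rw [← range_binaryForm, ← Submodule.map_comap_eq]
  exact (Submodule.equivMapOfInjective _ (binaryForm_injective n) _).finrank_eq.symm

theorem forall_evalAt_zero_left_dirD_pow_binaryForm_iff (n j : ℕ) (a : Fin (n + 1) → ℂ) :
    (∀ y, evalAt 0 y ((dirD 1 0 ^ j) (binaryForm n a)) = 0) ↔
      ∀ k : Fin (n + 1), (k : ℕ) = j → a k = 0 := by
  have h := forall_evalAt_mul_eq_zero_iff
    (isHomogeneous_dirD_pow (isHomogeneous_binaryForm n a) 1 0 j) 0 1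
  simp only [mul_zero, mul_one] at h
  have hsum : evalAt 0 1 ((dirD 1 0 ^ j) (binaryForm n a)) =
      ∑ k : Fin (n + 1), if (k : ℕ) = j then (j.factorial : ℂ) * a k else 0 := by
    simp only [binaryForm_apply, map_sum, map_smul, dirD_one_zero_pow_xyMonomial,
      evalAt_xyMonomial, one_pow, mul_one, smul_eq_mul]
    refine Finset.sum_congr rfl fun k _ => ?_
    rw [descFactorial_mul_zero_pow]
    split_ifs <;> ring
  rw [h, hsum, Fintype.sum_ite_eq_zero_iff fun k k' hk hk' => Fin.ext (hk.trans hk'.symm)]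
  simp [Nat.factorial_ne_zero]

theorem forall_evalAt_zero_right_dirD_pow_binaryForm_iff (n j : ℕ) (a : Fin (n + 1) → ℂ) :
    (∀ x, evalAt x 0 ((dirD 0 1 ^ j) (binaryForm n a)) = 0) ↔
      ∀ k : Fin (n + 1), n - k = j → a k = 0 := by
  have h := forall_evalAt_mul_eq_zero_iff
    (isHomogeneous_dirD_pow (isHomogeneous_binaryForm n a) 0 1 j) 1 0
  simp only [mul_zero, mul_one] at h
  have hsum : evalAt 1 0 ((dirD 0 1 ^ j) (binaryForm n a)) =
      ∑ k : Fin (n + 1), if n - k = j then (j.factorial : ℂ) * a k else 0 := by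
    simp only [binaryForm_apply, map_sum, map_smul, dirD_zero_one_pow_xyMonomial,
      evalAt_xyMonomial, one_pow, one_mul, smul_eq_mul]
    refine Finset.sum_congr rfl fun k _ => ?_
    rw [descFactorial_mul_zero_pow]
    split_ifs <;> ring
  rw [h, hsum, Fintype.sum_ite_eq_zero_iff fun k k' hk hk' => Fin.ext (by omega)]
  simp [Nat.factorial_ne_zero]

/-- The value of `(b₁∂ₓ + b₂∂_y)(xᵏ yⁿ⁻ᵏ)` at `(1, u)`. -/
noncomputable def lineCoeff (b₁ b₂ u : ℂ) (n k : ℕ) : ℂ :=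
  b₁ * k * u ^ (n - k) + b₂ * (n - k : ℕ) * u ^ (n - k - 1)

theorem forall_evalAt_line_dirD_binaryForm_iff (n : ℕ) (a : Fin (n + 1) → ℂ) (b₁ b₂ u : ℂ) :
    (∀ t, evalAt t (u * t) (dirD b₁ b₂ (binaryForm n a)) = 0) ↔
      ∑ k, a k * lineCoeff b₁ b₂ u n k = 0 := by
  have h := forall_evalAt_mul_eq_zero_iff
    (isHomogeneous_dirD (isHomogeneous_binaryForm n a) b₁ b₂) 1 u
  simp only [mul_one, mul_comm _ u] at h
  rw [h]
  simp only [binaryForm_apply, map_sum, map_smul, dirD_xyMonomial, map_add, evalAt_xyMonomial,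
    one_pow, one_mul, smul_eq_mul, lineCoeff]

theorem lineCoeff_neg (b₁ b₂ u : ℂ) (n k : ℕ) :
    lineCoeff b₁ b₂ (-u) n k = (-1) ^ (n - k) * lineCoeff b₁ (-b₂) u n k := by
  cases hnk : n - k with
  | zero => simp [lineCoeff, hnk]
  | succ i =>
    simp only [lineCoeff, hnk, neg_pow u, pow_succ, Nat.cast_add, Nat.cast_one, add_tsub_cancel_right]
    ring

noncomputable def mirrorCoeff (ξ : ℂ) (n : ℕ) (k : Fin (n + 1)) : ℂ := lineCoeff ξ (-1) ξ n k

theorem mirrorCoeff_eq_zero_iff {m l : ℕ} {ξ : ℂ}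
    (hξ : ξ ^ 2 = (2 * (l : ℂ) + 1) / (2 * (m : ℂ) + 1)) {n : ℕ} (k : Fin (n + 1)) :
    mirrorCoeff ξ n k = 0 ↔ (2 * l + 1) * k = (2 * m + 1) * (n - k) := by
  have hm : (2 * (m : ℂ) + 1) ≠ 0 := by exact_mod_cast (2 * m).succ_ne_zero
  have hl : (2 * (l : ℂ) + 1) ≠ 0 := by exact_mod_cast (2 * l).succ_ne_zero
  have hξ0 : ξ ≠ 0 := by
    rintro rfl
    exact hl ((div_eq_zero_iff.1 (by simpa using hξ.symm)).resolve_right hm)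
  have hmul : mirrorCoeff ξ n k * ξ = ξ ^ (n - k) * (ξ ^ 2 * k - (n - k : ℕ)) := by
    rw [mirrorCoeff]
    cases hnk : n - (k : ℕ) with
    | zero => simp only [lineCoeff, hnk, pow_zero, CharP.cast_eq_zero]; ring
    | succ i =>
      simp only [lineCoeff, hnk, pow_succ, Nat.cast_add, Nat.cast_one, add_tsub_cancel_right]
      ring
  rw [← mul_left_inj' hξ0, zero_mul, hmul, mul_eq_zero, or_iff_right (pow_ne_zero _ hξ0), hξ,
    div_mul_eq_mul_div, sub_eq_zero, div_eq_iff hm, ← Nat.cast_inj (R := ℂ)]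
  push_cast
  rw [mul_comm _ (2 * (m : ℂ) + 1)]

def evenExponents (n : ℕ) : Finset (Fin (n + 1)) := {k | (k : ℕ) % 2 = 0}

def freeOddExponents (m l n : ℕ) : Finset (Fin (n + 1)) :=
  {k | (k : ℕ) % 2 = 1 ∧ 2 * m < k ∧ 2 * l < n - k}

open Finset in
theorem card_evenExponents {n : ℕ} (hn : Even n) : #(evenExponents n) = n / 2 + 1 := by
  have : {k ∈ range (n + 1) | k % 2 = 0} = (range (n / 2 + 1)).image (2 * ·) := by
    ext k
    simp only [mem_filter, mem_range, mem_image]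
    constructor
    · rintro ⟨hk, h2⟩
      exact ⟨k / 2, by omega, by omega⟩
    · rintro ⟨i, hi, rfl⟩
      obtain ⟨j, rfl⟩ := hn
      omega
  rw [evenExponents, card_filter_fin_eq_card_filter_range (n + 1) (· % 2 = 0), this,
    card_image_of_injective _ fun i j h => by simpa using h, card_range]

open Finset in
theorem card_freeOddExponents (m l : ℕ) {n : ℕ} (hn : Even n) :
    #(freeOddExponents m l n) = n / 2 - m - l := by
  have : {k ∈ range (n + 1) | k % 2 = 1 ∧ 2 * m < k ∧ 2 * l < n - k} =
      (range (n / 2 - m - l)).image (2 * m + 1 + 2 * ·) := by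
    ext k
    obtain ⟨j, rfl⟩ := hn
    simp only [mem_filter, mem_range, mem_image]
    constructor
    · rintro ⟨hk, h2⟩
      exact ⟨(k - 2 * m - 1) / 2, by omega, by omega⟩
    · rintro ⟨i, hi, rfl⟩
      omega
  rw [freeOddExponents,
    card_filter_fin_eq_card_filter_range (n + 1) (fun k => k % 2 = 1 ∧ 2 * m < k ∧ 2 * l < n - k),
    this, card_image_of_injective _ fun i j h => by simpa using h, card_range]

theorem comap_binaryForm_quasiC (m l : ℕ) (ξ : ℂ) {n : ℕ} (hn : Even n) :
    Submodule.comap (binaryForm n) (quasiC m l ξ) =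
      supportedKer (evenExponents n ∪ freeOddExponents m l n) (mirrorCoeff ξ n) ⊓
        LinearMap.ker (Fintype.linearCombination ℂ
          ((fun k : Fin (n + 1) => (-1 : ℂ) ^ (k : ℕ)) * mirrorCoeff ξ n)) := by
  ext a
  have hplus := forall_evalAt_line_dirD_binaryForm_iff n a ξ 1 (-ξ)
  simp only [neg_mul] at hplus
  simp only [Submodule.mem_comap, quasiC, Submodule.mem_inf, Submodule.mem_iInf, LinearMap.mem_ker,
    LinearMap.comp_apply, forall_evalAt_zero_left_dirD_pow_binaryForm_iff,
    forall_evalAt_zero_right_dirD_pow_binaryForm_iff, hplus, forall_evalAt_line_dirD_binaryForm_iff,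
    mem_supportedKer, Fintype.linearCombination_apply, smul_eq_mul, Pi.mul_apply, mirrorCoeff]
  have hsign : ∑ k : Fin (n + 1), a k * lineCoeff ξ 1 (-ξ) n k =
      ∑ k : Fin (n + 1), a k * ((-1) ^ (k : ℕ) * lineCoeff ξ (-1) ξ n k) :=
    Finset.sum_congr rfl fun k _ => by
      rw [lineCoeff_neg, neg_one_pow_sub_of_even hn (Nat.lt_succ_iff.1 k.isLt)]
  obtain ⟨j, hj⟩ := hn
  have hkilled : ((∀ r ∈ Finset.Icc 1 m, ∀ k : Fin (n + 1), (k : ℕ) = 2 * r - 1 → a k = 0) ∧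
      ∀ r ∈ Finset.Icc 1 l, ∀ k : Fin (n + 1), n - k = 2 * r - 1 → a k = 0) ↔
      ∀ k ∉ evenExponents n ∪ freeOddExponents m l n, a k = 0 := by
    simp only [evenExponents, freeOddExponents, Finset.mem_union, Finset.mem_filter,
      Finset.mem_univ, true_and, Finset.mem_Icc]
    constructor
    · rintro ⟨hm, hl⟩ k hk
      have := k.isLt
      by_cases hkm : (k : ℕ) < 2 * m
      · exact hm ((k + 1) / 2) ⟨by omega, by omega⟩ k (by omega)
      · exact hl ((n - k + 1) / 2) ⟨by omega, by omega⟩ k (by omega)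
    · intro h
      exact ⟨fun r hr k hk => h k (by omega), fun r hr k hk => h k (by omega)⟩
  rw [hsign, hkilled]
  tauto

section
variable {m l : ℕ} {ξ : ℂ} (hξ : ξ ^ 2 = (2 * (l : ℂ) + 1) / (2 * (m : ℂ) + 1))
include hξ

theorem finrank_supportedKer_evenExponents {n : ℕ} (hn : Even n) :
    finrank ℂ (supportedKer (evenExponents n) (mirrorCoeff ξ n)) =
      if n = 0 then 1 else n / 2 := by
  split_ifs with hn0
  · subst hn0
    refine finrank_supportedKer_of_forall_eq_zero (fun k _ => ?_) |>.trans (card_evenExponents hn)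
    rw [mirrorCoeff_eq_zero_iff hξ, Fin.fin_one_eq_zero k]
    rfl
  · have hc : mirrorCoeff ξ n 0 ≠ 0 := by
      rw [Ne, mirrorCoeff_eq_zero_iff hξ]
      simp [hn0]
    have h := finrank_supportedKer_add_one (S := evenExponents n) ⟨0, by simp [evenExponents], hc⟩
    rw [card_evenExponents hn] at h
    omega

theorem finrank_supportedKer_freeOddExponents {n : ℕ} (hn : Even n) :
    finrank ℂ (supportedKer (freeOddExponents m l n) (mirrorCoeff ξ n)) =
      if n < 2 * (m + l + 1) then 0
      else if n = 2 * (m + l + 1) then 1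
      else n / 2 - m - l - 1 := by
  have hcard := card_freeOddExponents m l hn
  by_cases hlt : 2 * (m + l + 1) < n
  · have hk₀ : (⟨2 * m + 1, by omega⟩ : Fin (n + 1)) ∈ freeOddExponents m l n := by
      simp only [freeOddExponents, Finset.mem_filter, Finset.mem_univ, true_and]
      omega
    have hc : mirrorCoeff ξ n ⟨2 * m + 1, by omega⟩ ≠ 0 := by
      rw [Ne, mirrorCoeff_eq_zero_iff hξ]
      show ¬(2 * l + 1) * (2 * m + 1) = (2 * m + 1) * (n - (2 * m + 1))
      rw [mul_comm]
      intro h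
      have := Nat.eq_of_mul_eq_mul_left (by omega) h
      omega
    have h := finrank_supportedKer_add_one ⟨_, hk₀, hc⟩
    rw [if_neg (by omega), if_neg (by omega)]
    omega
  · rw [finrank_supportedKer_of_forall_eq_zero, hcard]
    · split_ifs <;> omega
    intro k hk
    simp only [freeOddExponents, Finset.mem_filter, Finset.mem_univ, true_and] at hk
    rw [mirrorCoeff_eq_zero_iff hξ, show (k : ℕ) = 2 * m + 1 by omega,
      show n - (2 * m + 1) = 2 * l + 1 by omega, mul_comm]

end

theorem quasiC_even_degree_dimension_general (m l : ℕ) (ξ : ℂ)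
    (hξ : ξ ^ 2 = (2 * (l : ℂ) + 1) / (2 * (m : ℂ) + 1)) (n : ℕ) (hn : Even n) :
    Module.finrank ℂ
        ↥(MvPolynomial.homogeneousSubmodule (Fin 2) ℂ n ⊓ quasiC m l ξ) =
      (if n = 0 then 1 else n / 2) +
      (if n < 2 * (m + l + 1) then 0
       else if n = 2 * (m + l + 1) then 1
       else n / 2 - m - l - 1) := by
  have hdisj : Disjoint (evenExponents n) (freeOddExponents m l n) := by
    simp only [Finset.disjoint_left, evenExponents, freeOddExponents, Finset.mem_filter,
      Finset.mem_univ, true_and]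
    omega
  have hsignE : ∀ k ∈ evenExponents n, (-1 : ℂ) ^ (k : ℕ) = 1 := fun k hk =>
    (Nat.even_iff.2 (by simpa [evenExponents] using hk)).neg_one_pow
  have hsignT : ∀ k ∈ freeOddExponents m l n, (-1 : ℂ) ^ (k : ℕ) = -1 := fun k hk =>
    (Nat.odd_iff.2 (by simp [freeOddExponents] at hk; exact hk.1)).neg_one_pow
  rw [finrank_homogeneousSubmodule_inf, comap_binaryForm_quasiC m l ξ hn,
    finrank_supportedKer_inf_ker hdisj _ _ hsignE hsignT,
    finrank_supportedKer_evenExponents hξ hn, finrank_supportedKer_freeOddExponents hξ hn]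

/-- For even `n`, the dimension of the space of all homogeneous quasi-invariants of degree `n`
for `C₂(m,l)` equals `(n = 0 ? 1 : n/2)` plus `(0 if n < 2(m+l+1), 1 if n = 2(m+l+1),
n/2 - m - l - 1 if n > 2(m+l+1))`. -/
theorem quasiC_even_degree_dimension (m l : ℕ) (hm : 1 ≤ m) (hl : 1 ≤ l) (ξ : ℂ)
    (hξ : ξ ^ 2 = (2 * (l : ℂ) + 1) / (2 * (m : ℂ) + 1)) (n : ℕ) (hn : Even n) :
    Module.finrank ℂ
        ↥(MvPolynomial.homogeneousSubmodule (Fin 2) ℂ n ⊓ quasiC m l ξ) =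
      (if n = 0 then 1 else n / 2) +
      (if n < 2 * (m + l + 1) then 0
       else if n = 2 * (m + l + 1) then 1
       else n / 2 - m - l - 1) :=
  quasiC_even_degree_dimension_general m l ξ hξ n hn
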